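/- Let (X,d,μ) be a complete connected doubling metric measure space and 0 < s < 1. For a ball B(x,R) with R bounded, and for a 1-Lipschitz bounded function f with f constant outside B(x,R), the nonlocal seminorm ‖f‖_{Ẇ^{s,1}(X)} := ∬_{X×X} |f(x)−f(y)|/(μ(B_{x,y}) d(x,y)^s) dμ(x) dμ(y) is finite; more precisely ‖f‖_{Ẇ^{s,1}(X)} ≤ (C/(s(1−s))) μ(B(x,R)) max(R^{1−s}, ‖f‖_∞ R^{−s}) for a constant C depending only on the doubling constant. -/

import Mathlib

/-! For fixed `y`, the inner integral `∫ |f x - f y| ker(x, y) dμ(x)` is cut into the dyadic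
annuli `r ≤ d(y, x) < 2r`, `r = 2^j ρ`. On such an annulus the kernel is at most
`μ(B(y, r))⁻¹ r^{-s} ≤ C μ(B(y, 2r))⁻¹ r^{-s}` and the annulus has measure at most `μ(B(y, 2r))`,
so it contributes `C · osc · r^{-s}`; the oscillation is `≤ 2r` on small annuli (Lipschitz) and
`≤ 2M` on large ones, and the two geometric series sum to `≲ ρ^{1-s}/(1-s)` and `≲ M ρ^{-s}/s`.
With `ρ = R` this bounds the outer integral over `B(z, 2R)`. For `y` in the annulus at scale
`2^{n+1} R` around `z` the integrand vanishes unless `x ∈ B(z, R)`, where `d(x, y) ≥ 2^n R`, and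
three doublings compare `μ(B(y, 2^n R))` with `μ(B(z, 2^{n+2} R)) ≥ μ(annulus)`, leaving a
geometric series in `n`. Nothing is assumed measurable, so only monotonicity and subadditivity of
the lower Lebesgue integral are used. -/

open MeasureTheory Metric
open scoped ENNReal

/-- The kernel `1/(μ(B_{x,y}) d(x,y)^s)` where `B_{x,y} = B(x,d(x,y)) ∪ B(y,d(y,x))`. -/
noncomputable def ker {X : Type*} [MetricSpace X] [MeasurableSpace X]
    (μ : Measure X) (s : ℝ) (x y : X) : ℝ≥0∞ :=
  1 / (μ (ball x (dist x y) ∪ ball y (dist y x)) * ENNReal.ofReal (dist x y ^ s))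

/-- The `Ẇ^{s,1}(X)` seminorm. -/
noncomputable def wSeminorm {X : Type*} [MetricSpace X] [MeasurableSpace X]
    (μ : Measure X) (s : ℝ) (f : X → ℝ) : ℝ≥0∞ :=
  ∫⁻ y, ∫⁻ x, ENNReal.ofReal |f x - f y| * ker μ s x y ∂μ ∂μ

lemma setLIntegral_le_mul_measure {α : Type*} [MeasurableSpace α] {μ : Measure α}
    {s : Set α} {f : α → ℝ≥0∞} {c : ℝ≥0∞} (h : ∀ x ∈ s, f x ≤ c) :
    ∫⁻ x in s, f x ∂μ ≤ c * μ s := by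
  -- `s` need not be measurable, so `x ∈ s` need not hold `μ.restrict s`-a.e.; it suffices that
  -- the sublevel sets of the approximating simple functions are measurable.
  rw [lintegral]
  refine iSup₂_le fun g hg => ?_
  have hgc : ∀ᵐ x ∂μ.restrict s, g x ≤ c := by
    simp only [ae_iff, not_le]
    rw [Measure.restrict_apply (measurableSet_lt measurable_const g.measurable)]
    convert measure_empty (μ := μ)
    exact Set.eq_empty_iff_forall_notMem.2 fun x ⟨hx, hxs⟩ =>
      (hx.trans_le ((hg x).trans (h x hxs))).false
  calc g.lintegral (μ.restrict s) = ∫⁻ x in s, g x ∂μ := (g.lintegral_eq_lintegral _).symm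
    _ ≤ ∫⁻ _ in s, c ∂μ := lintegral_mono_ae hgc
    _ = c * μ s := setLIntegral_const s c

lemma half_le_one_sub_two_rpow_neg {t : ℝ} (ht0 : 0 ≤ t) (ht1 : t ≤ 1) :
    t / 2 ≤ 1 - 2 ^ (-t) := by
  have h := rpow_one_add_le_one_add_mul_self (s := -1 / 2) (by norm_num) ht0 ht1
  rw [Real.rpow_neg zero_le_two, ← Real.inv_rpow zero_le_two]
  norm_num at h ⊢
  linarith

lemma ENNReal.tsum_le_of_le_mul_two_rpow_neg_pow {a : ℕ → ℝ≥0∞} {c t : ℝ} (hc : 0 ≤ c)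
    (ht0 : 0 < t) (ht1 : t ≤ 1) (ha : ∀ n, a n ≤ ENNReal.ofReal (c * (2 ^ (-t)) ^ n)) :
    ∑' n, a n ≤ ENNReal.ofReal (2 * c / t) := by
  have hgap := half_le_one_sub_two_rpow_neg ht0.le ht1
  have hq0 : (0 : ℝ) ≤ 2 ^ (-t) := by positivity
  have hq1 : (2 : ℝ) ^ (-t) < 1 := by linarith
  calc ∑' n, a n ≤ ∑' n, ENNReal.ofReal (c * (2 ^ (-t)) ^ n) := ENNReal.tsum_le_tsum ha
    _ = ENNReal.ofReal (∑' n, c * (2 ^ (-t)) ^ n) :=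
      (ENNReal.ofReal_tsum_of_nonneg (fun n => by positivity)
        ((summable_geometric_of_lt_one hq0 hq1).mul_left c)).symm
    _ = ENNReal.ofReal (c * (1 - 2 ^ (-t))⁻¹) := by
      rw [tsum_mul_left, tsum_geometric_of_lt_one hq0 hq1]
    _ ≤ ENNReal.ofReal (2 * c / t) := by
      refine ENNReal.ofReal_le_ofReal ?_
      rw [mul_comm 2 c, mul_div_assoc]
      gcongr
      rw [inv_le_comm₀ (by linarith) (by positivity), inv_div]
      exact hgap

lemma rpow_two_pow_mul (n : ℕ) {ρ : ℝ} (hρ : 0 ≤ ρ) (t : ℝ) :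
    (2 ^ n * ρ) ^ t = ρ ^ t * (2 ^ t) ^ n := by
  rw [Real.mul_rpow (by positivity) hρ, Real.rpow_pow_comm zero_le_two, mul_comm]

lemma rpow_div_two_pow (n : ℕ) {ρ : ℝ} (hρ : 0 ≤ ρ) (t : ℝ) :
    (ρ / 2 ^ n) ^ t = ρ ^ t * (2 ^ (-t)) ^ n := by
  rw [Real.div_rpow hρ (by positivity), ← Real.rpow_pow_comm zero_le_two,
    Real.rpow_neg zero_le_two, inv_pow, div_eq_mul_inv]

lemma add_div_le_div_mul_of_le {C s p q m : ℝ} (hC : 0 ≤ C) (hs : 0 < s) (hs1 : s < 1)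
    (hp : p ≤ m) (hq : q ≤ m) (hm : 0 ≤ m) :
    4 * C ^ 2 * p / s + 4 * C ^ 2 * q / (1 - s) + 4 * C ^ 3 * p / s
      ≤ (4 * C ^ 2 + 4 * C ^ 3) / (s * (1 - s)) * m := by
  have hs1' : 0 < 1 - s := by linarith
  have h1 : 4 * C ^ 2 * p / s ≤ 4 * C ^ 2 * m / s := by gcongr
  have h2 : 4 * C ^ 2 * q / (1 - s) ≤ 4 * C ^ 2 * m / (1 - s) := by gcongr
  have h3 : 4 * C ^ 3 * p / s ≤ 4 * C ^ 3 * m / s := by gcongr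
  have h4 : 0 ≤ 4 * C ^ 3 * m / (1 - s) := by positivity
  calc _ ≤ 4 * C ^ 2 * m / s + 4 * C ^ 2 * m / (1 - s) + 4 * C ^ 3 * m / s
        + 4 * C ^ 3 * m / (1 - s) := by linarith
    _ = _ := by field_simp; ring

lemma abs_sub_le_two_mul {α : Type*} {f : α → ℝ} {M : ℝ} (hM : ∀ x, |f x| ≤ M) (x y : α) :
    |f x - f y| ≤ 2 * M := by
  linarith [abs_sub (f x) (f y), hM x, hM y]

section Metric

variable {X : Type*} [MetricSpace X]

def dyadicAnnulus (y : X) (r : ℝ) : Set X := {x | r ≤ dist y x ∧ dist y x < 2 * r}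

lemma dyadicAnnulus_subset_ball (y : X) (r : ℝ) : dyadicAnnulus y r ⊆ ball y (2 * r) :=
  fun x hx => by rw [mem_ball, dist_comm]; exact hx.2

lemma setOf_le_dist_subset_iUnion_dyadicAnnulus (y : X) {ρ : ℝ} (hρ : 0 < ρ) :
    {x | ρ ≤ dist y x} ⊆ ⋃ n : ℕ, dyadicAnnulus y (2 ^ n * ρ) := by
  intro x hx
  obtain ⟨n, hn, hn1⟩ := exists_nat_pow_near ((one_le_div hρ).2 hx) one_lt_two
  rw [le_div_iff₀ hρ] at hn
  rw [div_lt_iff₀ hρ, pow_succ'] at hn1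
  exact Set.mem_iUnion.2 ⟨n, hn, by linarith⟩

lemma compl_singleton_subset_iUnion_dyadicAnnulus (y : X) {ρ : ℝ} (hρ : 0 < ρ) :
    {y}ᶜ ⊆ (⋃ n : ℕ, dyadicAnnulus y (2 ^ n * ρ)) ∪ ⋃ n : ℕ, dyadicAnnulus y (ρ / 2 ^ n) := by
  intro x hx
  obtain ⟨j, hj, hj1⟩ := exists_mem_Ico_zpow
    (div_pos (dist_pos.2 (Ne.symm hx)) hρ) (one_lt_two : (1 : ℝ) < 2)
  rw [le_div_iff₀ hρ] at hj
  rw [div_lt_iff₀ hρ] at hj1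
  rcases j with n | n
  · refine .inl (Set.mem_iUnion.2 ⟨n, ?_, ?_⟩)
    · simpa using hj
    · rw [zpow_add_one₀ two_ne_zero] at hj1
      simp only [Int.ofNat_eq_natCast, zpow_natCast] at hj1
      linarith
  · refine .inr (Set.mem_iUnion.2 ⟨n + 1, ?_, ?_⟩)
    · rw [zpow_negSucc] at hj
      rwa [div_eq_inv_mul]
    · rw [zpow_add_one₀ two_ne_zero, zpow_negSucc] at hj1
      rw [div_eq_inv_mul]
      linarith

end Metric

section Doubling

variable {X : Type*} [MetricSpace X] [MeasurableSpace X]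

def IsDoublingWith (μ : Measure X) (C : ℝ) : Prop :=
  ∀ (x : X) (r : ℝ), 0 < r →
    0 < μ (ball x r) ∧ μ (ball x r) < ⊤ ∧ μ (ball x (2 * r)) ≤ ENNReal.ofReal C * μ (ball x r)

namespace IsDoublingWith

variable {μ : Measure X} {C : ℝ}

lemma one_le (hμ : IsDoublingWith μ C) (x : X) : 1 ≤ C := by
  obtain ⟨h0, htop, h2⟩ := hμ x 1 one_pos
  have : 1 * μ (ball x 1) ≤ ENNReal.ofReal C * μ (ball x 1) :=
    (one_mul _).le.trans ((measure_mono (ball_subset_ball (by norm_num))).trans h2)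
  exact ENNReal.one_le_ofReal.1 ((ENNReal.mul_le_mul_iff_left h0.ne' htop.ne).1 this)

lemma measure_ball_two_pow_mul_le (hμ : IsDoublingWith μ C) (x : X) (k : ℕ) {r : ℝ}
    (hr : 0 < r) :
    μ (ball x (2 ^ k * r)) ≤ ENNReal.ofReal C ^ k * μ (ball x r) := by
  induction k with
  | zero => simp
  | succ k ih =>
    calc μ (ball x (2 ^ (k + 1) * r)) = μ (ball x (2 * (2 ^ k * r))) := by ring_nf
      _ ≤ ENNReal.ofReal C * μ (ball x (2 ^ k * r)) := (hμ x _ (by positivity)).2.2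
      _ ≤ ENNReal.ofReal C * (ENNReal.ofReal C ^ k * μ (ball x r)) := by gcongr
      _ = ENNReal.ofReal C ^ (k + 1) * μ (ball x r) := by ring

lemma inv_measure_ball_le (hμ : IsDoublingWith μ C) {y z : X} {k : ℕ} {r r' : ℝ} (hr : 0 < r)
    (hr' : 0 < r')
    (h : ball z r' ⊆ ball y (2 ^ k * r)) :
    (μ (ball y r))⁻¹ ≤ ENNReal.ofReal C ^ k * (μ (ball z r'))⁻¹ := by
  obtain ⟨h0, htop, -⟩ := hμ z r' hr'
  rw [← div_eq_mul_inv, ENNReal.le_div_iff_mul_le (.inl h0.ne') (.inl htop.ne), mul_comm,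
    ← div_eq_mul_inv, ENNReal.div_le_iff (hμ y r hr).1.ne' (hμ y r hr).2.1.ne]
  exact (measure_mono h).trans (hμ.measure_ball_two_pow_mul_le y k hr)

lemma setLIntegral_le_of_le_mul_inv_measure_ball (hμ : IsDoublingWith μ C) {S : Set X}
    {G : X → ℝ≥0∞} {A : ℝ≥0∞} {c : X} {r : ℝ} (hr : 0 < r) (hS : S ⊆ ball c r)
    (hG : ∀ w ∈ S, G w ≤ A * (μ (ball c r))⁻¹) :
    ∫⁻ w in S, G w ∂μ ≤ A := by
  obtain ⟨h0, htop, -⟩ := hμ c r hr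
  calc ∫⁻ w in S, G w ∂μ ≤ A * (μ (ball c r))⁻¹ * μ S := setLIntegral_le_mul_measure hG
    _ ≤ A * (μ (ball c r))⁻¹ * μ (ball c r) := by gcongr
    _ = A := by rw [mul_assoc, ENNReal.inv_mul_cancel h0.ne' htop.ne, mul_one]

end IsDoublingWith

variable {μ : Measure X} {C : ℝ}

lemma ker_le_of_le_dist {s r : ℝ} (hs : 0 ≤ s) (hr : 0 < r) {x y : X}
    (h : r ≤ dist y x) :
    ker μ s x y ≤ (μ (ball y r))⁻¹ * ENNReal.ofReal (r ^ (-s)) := by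
  rw [ker, one_div, Real.rpow_neg hr.le, ENNReal.ofReal_inv_of_pos (by positivity),
    ← ENNReal.mul_inv (.inr ENNReal.ofReal_ne_top) (.inr (by positivity))]
  gcongr
  · exact (ball_subset_ball h).trans Set.subset_union_right
  · rwa [dist_comm]

lemma setLIntegral_dyadicAnnulus_le (hμ : IsDoublingWith μ C) {s r a : ℝ} (hs : 0 ≤ s)
    (hr : 0 < r) {f : X → ℝ} {y : X} (ha : ∀ x ∈ dyadicAnnulus y r, |f x - f y| ≤ a) :
    ∫⁻ x in dyadicAnnulus y r, ENNReal.ofReal |f x - f y| * ker μ s x y ∂μ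
      ≤ ENNReal.ofReal (a * (C * r ^ (-s))) := by
  have hC := hμ.one_le y
  rw [ENNReal.ofReal_mul' (by positivity), ENNReal.ofReal_mul (by linarith)]
  refine hμ.setLIntegral_le_of_le_mul_inv_measure_ball (by positivity)
    (dyadicAnnulus_subset_ball y r) fun x hx => ?_
  calc ENNReal.ofReal |f x - f y| * ker μ s x y
      ≤ ENNReal.ofReal a * ((μ (ball y r))⁻¹ * ENNReal.ofReal (r ^ (-s))) :=
        mul_le_mul' (ENNReal.ofReal_le_ofReal (ha x hx)) (ker_le_of_le_dist hs hr hx.1)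
    _ ≤ ENNReal.ofReal a *
          ((ENNReal.ofReal C ^ 1 * (μ (ball y (2 * r)))⁻¹) * ENNReal.ofReal (r ^ (-s))) := by
        gcongr
        exact hμ.inv_measure_ball_le hr (by positivity) (by rw [pow_one])
    _ = ENNReal.ofReal a * (ENNReal.ofReal C * ENNReal.ofReal (r ^ (-s))) *
          (μ (ball y (2 * r)))⁻¹ := by ring

lemma setLIntegral_iUnion_dyadicAnnulus_two_pow_mul_le (hμ : IsDoublingWith μ C) {s : ℝ}
    (hs : 0 < s) (hs1 : s ≤ 1) {f : X → ℝ} {y : X} {b ρ : ℝ} (hb : ∀ x, |f x - f y| ≤ b)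
    (hρ : 0 < ρ) :
    ∫⁻ x in ⋃ n : ℕ, dyadicAnnulus y (2 ^ n * ρ), ENNReal.ofReal |f x - f y| * ker μ s x y ∂μ
      ≤ ENNReal.ofReal (2 * (C * b * ρ ^ (-s)) / s) := by
  have hC := hμ.one_le y
  have hb0 : 0 ≤ b := by simpa using hb y
  refine (lintegral_iUnion_le _ _).trans
    (ENNReal.tsum_le_of_le_mul_two_rpow_neg_pow (by positivity) hs hs1 fun n => ?_)
  refine (setLIntegral_dyadicAnnulus_le hμ hs.le (by positivity) fun x _ => hb x).trans_eq ?_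
  rw [rpow_two_pow_mul n hρ.le]
  ring_nf

lemma setLIntegral_iUnion_dyadicAnnulus_div_two_pow_le (hμ : IsDoublingWith μ C) {s : ℝ}
    (hs : 0 ≤ s) (hs1 : s < 1) {f : X → ℝ} {y : X} {ρ : ℝ}
    (hf : ∀ x, |f x - f y| ≤ dist x y) (hρ : 0 < ρ) :
    ∫⁻ x in ⋃ n : ℕ, dyadicAnnulus y (ρ / 2 ^ n), ENNReal.ofReal |f x - f y| * ker μ s x y ∂μ
      ≤ ENNReal.ofReal (2 * (2 * C * ρ ^ (1 - s)) / (1 - s)) := by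
  have hC := hμ.one_le y
  refine (lintegral_iUnion_le _ _).trans (ENNReal.tsum_le_of_le_mul_two_rpow_neg_pow
    (by positivity) (by linarith) (by linarith) fun n => ?_)
  have hr : 0 < ρ / 2 ^ n := by positivity
  refine (setLIntegral_dyadicAnnulus_le hμ hs hr fun x hx =>
    (hf x).trans (by rw [dist_comm]; exact hx.2.le)).trans_eq ?_
  rw [mul_assoc _ (ρ ^ _), ← rpow_div_two_pow n hρ.le, sub_eq_add_neg, Real.rpow_add hr,
    Real.rpow_one]
  ring_nf

theorem lintegral_abs_sub_mul_ker_le (hμ : IsDoublingWith μ C) {s : ℝ} (hs : 0 < s)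
    (hs1 : s < 1) {f : X → ℝ} {y : X} {b ρ : ℝ} (hf : ∀ x, |f x - f y| ≤ dist x y)
    (hb : ∀ x, |f x - f y| ≤ b) (hρ : 0 < ρ) :
    ∫⁻ x, ENNReal.ofReal |f x - f y| * ker μ s x y ∂μ
      ≤ ENNReal.ofReal (2 * (C * b * ρ ^ (-s)) / s + 2 * (2 * C * ρ ^ (1 - s)) / (1 - s)) := by
  set F := fun x => ENNReal.ofReal |f x - f y| * ker μ s x y
  have hC := hμ.one_le y
  have hb0 : 0 ≤ b := by simpa using hb y
  have hFy : ∫⁻ x in {y}, F x ∂μ = 0 :=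
    le_antisymm ((setLIntegral_le_mul_measure (c := 0) (by simp [F])).trans_eq (zero_mul _))
      bot_le
  have hcover : Set.univ ⊆ {y} ∪
      ((⋃ n : ℕ, dyadicAnnulus y (2 ^ n * ρ)) ∪ ⋃ n : ℕ, dyadicAnnulus y (ρ / 2 ^ n)) :=
    (Set.union_compl_self {y}).symm.subset.trans
      (Set.union_subset_union_right _ (compl_singleton_subset_iUnion_dyadicAnnulus y hρ))
  calc ∫⁻ x, F x ∂μ
      ≤ ∫⁻ x in {y}, F x ∂μ + (∫⁻ x in ⋃ n : ℕ, dyadicAnnulus y (2 ^ n * ρ), F x ∂μ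
          + ∫⁻ x in ⋃ n : ℕ, dyadicAnnulus y (ρ / 2 ^ n), F x ∂μ) := by
        rw [← setLIntegral_univ]
        exact (lintegral_mono_set hcover).trans ((lintegral_union_le _ _ _).trans
          (add_le_add_right (lintegral_union_le _ _ _) _))
    _ ≤ 0 + (ENNReal.ofReal (2 * (C * b * ρ ^ (-s)) / s)
          + ENNReal.ofReal (2 * (2 * C * ρ ^ (1 - s)) / (1 - s))) := by
        rw [hFy]
        gcongr
        · exact setLIntegral_iUnion_dyadicAnnulus_two_pow_mul_le hμ hs hs1.le hb hρ
        · exact setLIntegral_iUnion_dyadicAnnulus_div_two_pow_le hμ hs.le hs1 hf hρ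
    _ = _ := by
        rw [zero_add, ← ENNReal.ofReal_add (by positivity) (div_nonneg (by positivity)
          (by linarith))]

lemma lintegral_abs_sub_mul_ker_le_of_far {s : ℝ} (hs : 0 ≤ s) {f : X → ℝ} {z y : X}
    {R r b c : ℝ} (hRr : R ≤ r) (hy : 2 * r ≤ dist z y) (hc : ∀ x ∉ ball z R, f x = c)
    (hb : ∀ x, |f x - f y| ≤ b) :
    ∫⁻ x, ENNReal.ofReal |f x - f y| * ker μ s x y ∂μ
      ≤ ENNReal.ofReal (b * r ^ (-s)) * (μ (ball y r))⁻¹ * μ (ball z R) := by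
  have hyR : y ∉ ball z R := by
    rw [mem_ball, dist_comm]
    linarith [dist_nonneg (x := z) (y := y)]
  refine (lintegral_mono (g := (ball z R).indicator
    fun _ => ENNReal.ofReal (b * r ^ (-s)) * (μ (ball y r))⁻¹) fun x => ?_).trans
    (lintegral_indicator_const_le _ _)
  by_cases hx : x ∈ ball z R
  · rw [Set.indicator_of_mem hx]
    have hr : 0 < r := by linarith [dist_nonneg.trans_lt hx]
    have hxy : r ≤ dist y x := by
      linarith [dist_triangle z x y, mem_ball.1 hx, dist_comm x y, dist_comm x z]
    calc ENNReal.ofReal |f x - f y| * ker μ s x y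
        ≤ ENNReal.ofReal b * ((μ (ball y r))⁻¹ * ENNReal.ofReal (r ^ (-s))) :=
          mul_le_mul' (ENNReal.ofReal_le_ofReal (hb x)) (ker_le_of_le_dist hs hr hxy)
      _ = _ := by
          rw [ENNReal.ofReal_mul' (by positivity)]
          ring
  · rw [Set.indicator_of_notMem hx, hc x hx, hc y hyR]
    simp

lemma setLIntegral_dyadicAnnulus_far_le (hμ : IsDoublingWith μ C) {s : ℝ} (hs : 0 ≤ s)
    {f : X → ℝ} {z : X} {R r b c : ℝ} (hr : 0 < r) (hRr : R ≤ r)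
    (hc : ∀ x ∉ ball z R, f x = c) (hb : ∀ x y, |f x - f y| ≤ b) :
    ∫⁻ y in dyadicAnnulus z (2 * r), ∫⁻ x, ENNReal.ofReal |f x - f y| * ker μ s x y ∂μ ∂μ
      ≤ ENNReal.ofReal (b * C ^ 3 * r ^ (-s)) * μ (ball z R) := by
  have hC := hμ.one_le z
  have hb0 : 0 ≤ b := by simpa using hb z z
  refine hμ.setLIntegral_le_of_le_mul_inv_measure_ball (by positivity)
    (dyadicAnnulus_subset_ball z (2 * r)) fun y hy => ?_
  have hsub : ball z (2 * (2 * r)) ⊆ ball y (2 ^ 3 * r) := fun w hw => by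
    rw [mem_ball] at hw ⊢
    linarith [dist_triangle w z y, hy.2]
  calc ∫⁻ x, ENNReal.ofReal |f x - f y| * ker μ s x y ∂μ
      ≤ ENNReal.ofReal (b * r ^ (-s)) * (μ (ball y r))⁻¹ * μ (ball z R) :=
        lintegral_abs_sub_mul_ker_le_of_far hs hRr hy.1 hc fun x => hb x y
    _ ≤ ENNReal.ofReal (b * r ^ (-s)) *
          (ENNReal.ofReal C ^ 3 * (μ (ball z (2 * (2 * r))))⁻¹) * μ (ball z R) := by
        gcongr
        exact hμ.inv_measure_ball_le hr (by positivity) hsub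
    _ = ENNReal.ofReal (b * C ^ 3 * r ^ (-s)) * μ (ball z R) *
          (μ (ball z (2 * (2 * r))))⁻¹ := by
        rw [mul_right_comm b, ENNReal.ofReal_mul (p := b * r ^ (-s)) (by positivity),
          ENNReal.ofReal_pow (by linarith)]
        ring

lemma setLIntegral_iUnion_dyadicAnnulus_far_le (hμ : IsDoublingWith μ C) {s : ℝ} (hs : 0 < s)
    (hs1 : s ≤ 1) {f : X → ℝ} {z : X} {R b c : ℝ} (hR : 0 < R) (hc : ∀ x ∉ ball z R, f x = c)
    (hb : ∀ x y, |f x - f y| ≤ b) :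
    ∫⁻ y in ⋃ n : ℕ, dyadicAnnulus z (2 ^ n * (2 * R)),
        ∫⁻ x, ENNReal.ofReal |f x - f y| * ker μ s x y ∂μ ∂μ
      ≤ ENNReal.ofReal (2 * (b * C ^ 3 * R ^ (-s)) / s) * μ (ball z R) := by
  have hC := hμ.one_le z
  have hb0 : 0 ≤ b := by simpa using hb z z
  have hn (n : ℕ) : ∫⁻ y in dyadicAnnulus z (2 ^ n * (2 * R)),
        ∫⁻ x, ENNReal.ofReal |f x - f y| * ker μ s x y ∂μ ∂μ
      ≤ ENNReal.ofReal (b * C ^ 3 * R ^ (-s) * (2 ^ (-s)) ^ n) * μ (ball z R) := by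
    rw [mul_left_comm (2 ^ n : ℝ)]
    refine (setLIntegral_dyadicAnnulus_far_le hμ hs.le (by positivity)
      (le_mul_of_one_le_left hR.le (one_le_pow₀ one_le_two)) hc hb).trans_eq ?_
    rw [rpow_two_pow_mul n hR.le]
    ring_nf
  calc _ ≤ ∑' n : ℕ, ENNReal.ofReal (b * C ^ 3 * R ^ (-s) * (2 ^ (-s)) ^ n) * μ (ball z R) :=
        (lintegral_iUnion_le _ _).trans (ENNReal.tsum_le_tsum hn)
    _ ≤ _ := by
        rw [ENNReal.tsum_mul_right]
        gcongr
        exact ENNReal.tsum_le_of_le_mul_two_rpow_neg_pow (by positivity) hs hs1 fun n => le_rfl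

theorem wSeminorm_le (hμ : IsDoublingWith μ C) {s : ℝ} (hs : 0 < s) (hs1 : s < 1)
    {f : X → ℝ} {z : X} {R M c : ℝ} (hR : 0 < R) (hf : LipschitzWith 1 f)
    (hM : ∀ x, |f x| ≤ M) (hc : ∀ x ∉ ball z R, f x = c) :
    wSeminorm μ s f ≤ ENNReal.ofReal (4 * C ^ 2 * (M * R ^ (-s)) / s
      + 4 * C ^ 2 * R ^ (1 - s) / (1 - s) + 4 * C ^ 3 * (M * R ^ (-s)) / s) * μ (ball z R) := by
  set I := fun y => ∫⁻ x, ENNReal.ofReal |f x - f y| * ker μ s x y ∂μ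
  have hC := hμ.one_le z
  have hM0 : 0 ≤ M := (abs_nonneg _).trans (hM z)
  have hlip (x y : X) : |f x - f y| ≤ dist x y := by
    simpa [Real.dist_eq] using hf.dist_le_mul x y
  have hcover : Set.univ ⊆ ball z (2 * R) ∪ ⋃ n : ℕ, dyadicAnnulus z (2 ^ n * (2 * R)) :=
    fun w _ => by
      by_cases hw : dist w z < 2 * R
      · exact .inl hw
      · refine .inr (setOf_le_dist_subset_iUnion_dyadicAnnulus z (by positivity) ?_)
        rw [Set.mem_ofPred_eq, dist_comm]
        exact not_lt.1 hw
  have hnear : ∫⁻ y in ball z (2 * R), I y ∂μ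
      ≤ ENNReal.ofReal (2 * (C * (2 * M) * R ^ (-s)) / s + 2 * (2 * C * R ^ (1 - s)) / (1 - s))
        * (ENNReal.ofReal C * μ (ball z R)) :=
    (setLIntegral_le_mul_measure fun y _ =>
      lintegral_abs_sub_mul_ker_le hμ hs hs1 (hlip · y) (abs_sub_le_two_mul hM · y) hR).trans
      (by gcongr; exact (hμ z R hR).2.2)
  calc wSeminorm μ s f = ∫⁻ y in Set.univ, I y ∂μ := (setLIntegral_univ _).symm
    _ ≤ ∫⁻ y in ball z (2 * R), I y ∂μ
          + ∫⁻ y in ⋃ n : ℕ, dyadicAnnulus z (2 ^ n * (2 * R)), I y ∂μ :=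
        (lintegral_mono_set hcover).trans (lintegral_union_le _ _ _)
    _ ≤ ENNReal.ofReal (2 * (C * (2 * M) * R ^ (-s)) / s + 2 * (2 * C * R ^ (1 - s)) / (1 - s))
          * (ENNReal.ofReal C * μ (ball z R))
          + ENNReal.ofReal (2 * (2 * M * C ^ 3 * R ^ (-s)) / s) * μ (ball z R) :=
        add_le_add hnear (setLIntegral_iUnion_dyadicAnnulus_far_le hμ hs hs1.le hR hc
          (abs_sub_le_two_mul hM))
    _ = _ := by
        rw [← mul_assoc (ENNReal.ofReal _), ← ENNReal.ofReal_mul (by positivity), ← add_mul,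
          ← ENNReal.ofReal_add (by positivity) (by positivity)]
        ring_nf

end Doubling

theorem stmt13_general {X : Type*} [MetricSpace X] [MeasurableSpace X]
    (μ : Measure X) (Cμ : ℝ) (hC : 1 ≤ Cμ)
    (hdoub : ∀ (x : X) (r : ℝ), 0 < r →
      0 < μ (ball x r) ∧ μ (ball x r) < ⊤ ∧
        μ (ball x (2 * r)) ≤ ENNReal.ofReal Cμ * μ (ball x r)) :
    ∃ C > (0 : ℝ), ∀ (s : ℝ), 0 < s → s < 1 →
      ∀ (z : X) (R : ℝ) (f : X → ℝ) (M c : ℝ), 0 < R →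
        LipschitzWith 1 f → (∀ x, |f x| ≤ M) → (∀ x ∉ ball z R, f x = c) →
        wSeminorm μ s f
          ≤ ENNReal.ofReal ((C / (s * (1 - s))) * (μ (ball z R)).toReal *
              max (R ^ (1 - s)) (M * R ^ (-s))) := by
  refine ⟨4 * Cμ ^ 2 + 4 * Cμ ^ 3, by nlinarith, fun s hs hs1 z R f M c hR hf hM hc => ?_⟩
  calc wSeminorm μ s f ≤ _ := wSeminorm_le hdoub hs hs1 hR hf hM hc
    _ ≤ ENNReal.ofReal ((4 * Cμ ^ 2 + 4 * Cμ ^ 3) / (s * (1 - s)) *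
          max (R ^ (1 - s)) (M * R ^ (-s))) * μ (ball z R) := by
      gcongr
      exact add_div_le_div_mul_of_le (by linarith) hs hs1 (le_max_right _ _) (le_max_left _ _)
        ((Real.rpow_nonneg hR.le _).trans (le_max_left _ _))
    _ = _ := by
      rw [mul_right_comm _ (μ (ball z R)).toReal, ENNReal.ofReal_mul' ENNReal.toReal_nonneg,
        ENNReal.ofReal_toReal (hdoub z R hR).2.1.ne]

/-- For a bounded `1`-Lipschitz function `f` which is constant outside a ball `B(z,R)`,
the nonlocal seminorm is finite, with bound
`‖f‖_{Ẇ^{s,1}(X)} ≤ (C/(s(1−s))) μ(B(z,R)) max(R^{1−s}, ‖f‖_∞ R^{−s})`,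
with `C` depending only on the doubling constant. -/
theorem stmt13 {X : Type*} [MetricSpace X] [MeasurableSpace X]
    [CompleteSpace X] [ConnectedSpace X]
    (μ : Measure X) (Cμ : ℝ) (hC : 1 ≤ Cμ)
    (hdoub : ∀ (x : X) (r : ℝ), 0 < r →
      0 < μ (ball x r) ∧ μ (ball x r) < ⊤ ∧
        μ (ball x (2 * r)) ≤ ENNReal.ofReal Cμ * μ (ball x r)) :
    ∃ C > (0 : ℝ), ∀ (s : ℝ), 0 < s → s < 1 →
      ∀ (z : X) (R : ℝ) (f : X → ℝ) (M c : ℝ), 0 < R →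
        LipschitzWith 1 f → (∀ x, |f x| ≤ M) → (∀ x ∉ ball z R, f x = c) →
        wSeminorm μ s f
          ≤ ENNReal.ofReal ((C / (s * (1 - s))) * (μ (ball z R)).toReal *
              max (R ^ (1 - s)) (M * R ^ (-s))) :=
  stmt13_general μ Cμ hC hdoub
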